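/- arXiv:1407.7802 — 2 statements merged into one kernel-verified Lean document; each statement's English description precedes it below -/
import Mathlib

section
/- For every positive integer n and every real λ with −n²π² < λ < n²π² and λ ≠ 0, one has F̃(λ) ≠ 0. In particular, the eigenvalue equation of the indefinite Laplacian has no root in (−n²π², 0) ∪ (0, n²π²). -/
open Real

lemma tanh_div_hasDerivAt {x : ℝ} (hx : x ≠ 0) :
    HasDerivAt (fun x => Real.tanh x / x)
      ((x - Real.sinh x * Real.cosh x) / (x * Real.cosh x) ^ 2) x := by
  have hc : Real.cosh x ≠ 0 := ne_of_gt (Real.cosh_pos x)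
  have h1 : HasDerivAt Real.sinh (Real.cosh x) x := Real.hasDerivAt_sinh x
  have h2 : HasDerivAt (fun x => x * Real.cosh x)
      (1 * Real.cosh x + x * Real.sinh x) x :=
    (hasDerivAt_id x).mul (Real.hasDerivAt_cosh x)
  have hd : HasDerivAt (fun x => Real.sinh x / (x * Real.cosh x))
      ((Real.cosh x * (x * Real.cosh x) -
        Real.sinh x * (1 * Real.cosh x + x * Real.sinh x)) / (x * Real.cosh x) ^ 2) x :=
    h1.div h2 (mul_ne_zero hx hc)
  have heq : (fun x => Real.sinh x / (x * Real.cosh x)) = fun x => Real.tanh x / x := by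
    funext y
    rw [Real.tanh_eq_sinh_div_cosh]
    field_simp
  rw [heq] at hd
  convert hd using 2
  have h3 := Real.cosh_sq_sub_sinh_sq x
  linear_combination (-x) * h3

lemma tanh_div_strictAntiOn : StrictAntiOn (fun x => Real.tanh x / x) (Set.Ioi 0) := by
  apply strictAntiOn_of_deriv_neg (convex_Ioi 0)
  · apply ContinuousOn.div
    · have : Real.tanh = fun x => Real.sinh x / Real.cosh x := by
        funext y; exact Real.tanh_eq_sinh_div_cosh y
      rw [this]
      exact (Real.continuous_sinh.div Real.continuous_cosh
        fun y => ne_of_gt (Real.cosh_pos y)).continuousOn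
    · exact continuous_id.continuousOn
    · intro x hx; exact ne_of_gt hx
  · intro x hx
    rw [interior_Ioi] at hx
    have hx0 : (0:ℝ) < x := hx
    rw [(tanh_div_hasDerivAt (ne_of_gt hx0)).deriv]
    apply div_neg_of_neg_of_pos
    · have h1 : x < Real.sinh x := Real.self_lt_sinh_iff.mpr hx0
      have h2 : 1 < Real.cosh x := by
        rw [Real.one_lt_cosh]; exact ne_of_gt hx0
      have hs : 0 < Real.sinh x := lt_trans hx0 h1
      nlinarith
    · positivity

/-- For every positive integer `n` and every real `λ` with `−n²π² < λ < n²π²` and `λ ≠ 0`,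
`F̃(λ) = tanh(√(λ+n²π²))/√(λ+n²π²) − tanh(√(n²π²−λ))/√(n²π²−λ)` does not vanish.
In particular, the eigenvalue equation of the indefinite Laplacian has no root in
`(−n²π², 0) ∪ (0, n²π²)`. -/
theorem stmt_2 (n : ℕ) (hn : 0 < n) (lam : ℝ)
    (hlam0 : -((n : ℝ)^2 * π^2) < lam) (hlam1 : lam < (n : ℝ)^2 * π^2) (hne : lam ≠ 0) :
    Real.tanh (Real.sqrt (lam + (n : ℝ)^2 * π^2)) / Real.sqrt (lam + (n : ℝ)^2 * π^2)
      - Real.tanh (Real.sqrt ((n : ℝ)^2 * π^2 - lam)) / Real.sqrt ((n : ℝ)^2 * π^2 - lam) ≠ 0 := by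
  set c : ℝ := (n : ℝ)^2 * π^2 with hc
  have ha : 0 < lam + c := by linarith
  have hb : 0 < c - lam := by linarith
  have hab : lam + c ≠ c - lam := by
    intro h
    apply hne
    linarith
  have hsa : 0 < Real.sqrt (lam + c) := Real.sqrt_pos.mpr ha
  have hsb : 0 < Real.sqrt (c - lam) := Real.sqrt_pos.mpr hb
  have hsne : Real.sqrt (lam + c) ≠ Real.sqrt (c - lam) := by
    intro h
    exact hab ((Real.sqrt_inj (le_of_lt ha) (le_of_lt hb)).mp h)
  intro h
  apply hsne
  apply tanh_div_strictAntiOn.injOn hsa hsb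
  simpa [sub_eq_zero] using h
end

section
/- Let n be a positive integer and let λ be a real number with λ > n²π², cos(√(λ−n²π²)) ≠ 0 and F(λ) = 0. Then every real number d such that F has derivative d at λ satisfies d < 0. In other words, all roots of the eigenvalue equation above n²π² are simple with F strictly decreasing through them. -/
/-!
With `a = √(λ + n²π²)` and `b = √(λ - n²π²)`, `F(λ) = g a - h b` for `g x = tanh x / x` and
`h x = tan x / x`. Since `g' x = (x - sinh x cosh x) / (x cosh x)²` and
`h' x = (x - sin x cos x) / (x cos x)²`, the inequalities `sin 2x < 2x < sinh 2x` for `x > 0`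
make `g` decreasing and `h` increasing, so `F' < 0` wherever `cos b ≠ 0`.
-/

open Real

theorem Real.hasDerivAt_tanh (x : ℝ) : HasDerivAt tanh (1 / cosh x ^ 2) x := by
  have h := (hasDerivAt_sinh x).div (hasDerivAt_cosh x) (cosh_pos x).ne'
  rw [← sq, ← sq, cosh_sq_sub_sinh_sq] at h
  rwa [show (sinh / cosh : ℝ → ℝ) = tanh from funext fun y => (tanh_eq_sinh_div_cosh y).symm] at h

theorem hasDerivAt_tanh_div_self {x : ℝ} (hx : x ≠ 0) :
    HasDerivAt (fun y => tanh y / y) ((x - sinh x * cosh x) / (x ^ 2 * cosh x ^ 2)) x := by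
  refine ((hasDerivAt_tanh x).div (hasDerivAt_id' x) hx).congr_deriv ?_
  have := (cosh_pos x).ne'
  rw [tanh_eq_sinh_div_cosh]
  field_simp

theorem hasDerivAt_tan_div_self {x : ℝ} (hx : x ≠ 0) (hcos : cos x ≠ 0) :
    HasDerivAt (fun y => tan y / y) ((x - sin x * cos x) / (x ^ 2 * cos x ^ 2)) x := by
  refine ((hasDerivAt_tan hcos).div (hasDerivAt_id' x) hx).congr_deriv ?_
  rw [tan_eq_sin_div_cos]
  field_simp

theorem lt_sinh_mul_cosh {x : ℝ} (hx : 0 < x) : x < sinh x * cosh x := by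
  have := self_lt_sinh_iff.2 (by positivity : 0 < 2 * x)
  rw [sinh_two_mul] at this
  linarith

theorem sin_mul_cos_lt {x : ℝ} (hx : 0 < x) : sin x * cos x < x := by
  have := sin_lt (by positivity : 0 < 2 * x)
  rw [sin_two_mul] at this
  linarith

theorem stmt_4_general (n : ℕ) (lam : ℝ) (hlam : lam > (n : ℝ)^2 * π^2)
    (hcos : Real.cos (Real.sqrt (lam - (n : ℝ)^2 * π^2)) ≠ 0) :
    ∀ d : ℝ,
      HasDerivAt
        (fun l : ℝ =>
          Real.tanh (Real.sqrt (l + (n : ℝ)^2 * π^2)) / Real.sqrt (l + (n : ℝ)^2 * π^2)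
            - Real.tan (Real.sqrt (l - (n : ℝ)^2 * π^2)) / Real.sqrt (l - (n : ℝ)^2 * π^2))
        d lam
      → d < 0 := by
  intro d hd
  set c := (n : ℝ) ^ 2 * π ^ 2
  have hc : 0 ≤ c := by positivity
  have hadd : 0 < lam + c := by linarith
  have hsub : 0 < lam - c := by linarith
  set a := √(lam + c)
  set b := √(lam - c)
  have ha : 0 < a := sqrt_pos.2 hadd
  have hb : 0 < b := sqrt_pos.2 hsub
  have hD := ((hasDerivAt_tanh_div_self ha.ne').comp lam
      (((hasDerivAt_id' lam).add_const c).sqrt hadd.ne')).sub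
    ((hasDerivAt_tan_div_self hb.ne' hcos).comp lam
      (((hasDerivAt_id' lam).sub_const c).sqrt hsub.ne'))
  rw [hd.unique hD]
  have hg : (a - sinh a * cosh a) / (a ^ 2 * cosh a ^ 2) * (1 / (2 * a)) < 0 :=
    mul_neg_of_neg_of_pos (div_neg_of_neg_of_pos (sub_neg.2 (lt_sinh_mul_cosh ha))
      (by positivity)) (by positivity)
  have hh : 0 < (b - sin b * cos b) / (b ^ 2 * cos b ^ 2) * (1 / (2 * b)) := by
    have := sub_pos.2 (sin_mul_cos_lt hb)
    positivity
  exact sub_neg.2 (hg.trans hh)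

/-- Let `n` be a positive integer and `λ > n²π²` with `cos(√(λ−n²π²)) ≠ 0` and `F(λ) = 0`,
where `F(μ) = tanh(√(μ+n²π²))/√(μ+n²π²) − tan(√(μ−n²π²))/√(μ−n²π²)`. Then every real `d`
such that `F` has derivative `d` at `λ` satisfies `d < 0`: all roots of the eigenvalue
equation above `n²π²` are simple, with `F` strictly decreasing through them. -/
theorem stmt_4 (n : ℕ) (hn : 0 < n) (lam : ℝ) (hlam : lam > (n : ℝ)^2 * π^2)
    (hcos : Real.cos (Real.sqrt (lam - (n : ℝ)^2 * π^2)) ≠ 0)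
    (hF : Real.tanh (Real.sqrt (lam + (n : ℝ)^2 * π^2)) / Real.sqrt (lam + (n : ℝ)^2 * π^2)
        - Real.tan (Real.sqrt (lam - (n : ℝ)^2 * π^2)) / Real.sqrt (lam - (n : ℝ)^2 * π^2) = 0) :
    ∀ d : ℝ,
      HasDerivAt
        (fun l : ℝ =>
          Real.tanh (Real.sqrt (l + (n : ℝ)^2 * π^2)) / Real.sqrt (l + (n : ℝ)^2 * π^2)
            - Real.tan (Real.sqrt (l - (n : ℝ)^2 * π^2)) / Real.sqrt (l - (n : ℝ)^2 * π^2))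
        d lam
      → d < 0 :=
  stmt_4_general n lam hlam hcos
end
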